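/- Let α ∈ [0,1), R > 0 and λ₁, λ₂ > 0 with λ₁ ≠ λ₂. If U_{λ₁,α} and U_{λ₂,α} take the same value at some point x₀ ∈ ℝ² with |x₀| = R, then ∫_{B_R(0)} ( |x|^{-2α} e^{U_{λ₁,α}(x)} + |x|^{-2α} e^{U_{λ₂,α}(x)} ) dx = 8π(1−α), where the integral is with respect to two-dimensional Lebesgue measure on the open ball B_R(0) ⊂ ℝ². -/

import Mathlib

open Real MeasureTheory Metric Filter Topology RealInnerProductSpace

noncomputable section

/-- The plane `ℝ²`. -/
abbrev Pl := EuclideanSpace ℝ (Fin 2)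

/-- The Laplacian `Δu = ∂²u/∂x₁² + ∂²u/∂x₂²` of a function on `ℝ²`. -/
def lap (u : Pl → ℝ) (x : Pl) : ℝ :=
  ∑ i : Fin 2, fderiv ℝ (fun y => fderiv ℝ u y (EuclideanSpace.single i 1)) x
    (EuclideanSpace.single i 1)

/-- The radial profile of `U_{λ,α}`. -/
def Uval (lam a r : ℝ) : ℝ :=
  Real.log ((lam * (1 - a)) ^ 2 / (1 + lam ^ 2 / 8 * r ^ (2 * (1 - a))) ^ 2)

/-- `U_{λ,α}(x) = ln( (λ(1−α))² / (1 + (λ²/8)|x|^{2(1−α)})² )`. -/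
def U (lam a : ℝ) (x : Pl) : ℝ := Uval lam a ‖x‖

/-!
In polar coordinates the mass of a single bubble on `B_R` has the explicit primitive
`r ↦ -4(1-α) / (1 + s(r))` with `s(r) = λ² r^{2(1-α)} / 8`, so it equals
`8π(1-α) · s/(1+s)` with `s = s(R)`. Equality of `U_{λ₁,α}` and `U_{λ₂,α}` at radius `R` says
`λ₁/(1+s₁) = λ₂/(1+s₂)`, which for `λ₁ ≠ λ₂` forces `λ₁λ₂R^{2(1-α)} = 8`, i.e. `s₁s₂ = 1`;
then `s₁/(1+s₁) + s₂/(1+s₂) = 1`.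
-/

open Set intervalIntegral

section Radial

variable {E F : Type*} [NormedAddCommGroup E] [NormedSpace ℝ E] [MeasurableSpace E] [BorelSpace E]
  [FiniteDimensional ℝ E] [Nontrivial E] [NormedAddCommGroup F] [NormedSpace ℝ F]

theorem setIntegral_ball_fun_norm_addHaar (μ : Measure E) [μ.IsAddHaarMeasure] (f : ℝ → F)
    (r : ℝ) :
    ∫ x in ball (0 : E) r, f ‖x‖ ∂μ = Module.finrank ℝ E • μ.real (ball 0 1) •
      ∫ y in Ioo 0 r, y ^ (Module.finrank ℝ E - 1) • f y := by
  have hball : (ball (0 : E) r).indicator (fun x => f ‖x‖) = fun x => (Iio r).indicator f ‖x‖ := by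
    ext x
    by_cases hx : ‖x‖ < r <;> simp [hx]
  rw [← MeasureTheory.integral_indicator measurableSet_ball, hball, integral_fun_norm_addHaar]
  simp_rw [← indicator_smul_apply (Iio r) fun y : ℝ => y ^ (Module.finrank ℝ E - 1)]
  rw [setIntegral_indicator measurableSet_Iio, Ioi_inter_Iio]

end Radial

theorem setIntegral_ball_fun_norm_plane (g : ℝ → ℝ) (R : ℝ) :
    ∫ x in ball (0 : Pl) R, g ‖x‖ = 2 * π * ∫ y in Ioo 0 R, y * g y := by
  have hvol : volume.real (ball (0 : Pl) 1) = π := by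
    simp [measureReal_def, ENNReal.toReal_ofReal pi_pos.le]
  rw [setIntegral_ball_fun_norm_addHaar, finrank_euclideanSpace_fin, hvol]
  simp only [smul_eq_mul, nsmul_eq_mul, Nat.cast_ofNat, Nat.add_one_sub_one, pow_one]
  ring

section Bubble

variable {lam a : ℝ}

theorem exp_Uval (hlam : lam ≠ 0) (ha : a ≠ 1) {r : ℝ} (hr : 0 ≤ r) :
    exp (Uval lam a r) = (lam * (1 - a)) ^ 2 / (1 + lam ^ 2 / 8 * r ^ (2 * (1 - a))) ^ 2 := by
  have hb : 1 - a ≠ 0 := sub_ne_zero.2 ha.symm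
  rw [Uval, exp_log (by positivity)]

def bubblePrimitive (lam a t : ℝ) : ℝ := -(4 * (1 - a)) / (1 + lam ^ 2 / 8 * t ^ (2 * (1 - a)))

theorem hasDerivAt_bubblePrimitive (hlam : lam ≠ 0) (ha : a ≠ 1) {r : ℝ} (hr : 0 < r) :
    HasDerivAt (bubblePrimitive lam a) (r * (r ^ (-(2 * a)) * exp (Uval lam a r))) r := by
  have hden : HasDerivAt (fun t : ℝ => 1 + lam ^ 2 / 8 * t ^ (2 * (1 - a)))
      (lam ^ 2 / 8 * (2 * (1 - a) * r ^ (2 * (1 - a) - 1))) r :=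
    ((hasDerivAt_rpow_const (Or.inl hr.ne')).const_mul _).const_add 1
  refine ((hasDerivAt_const r (-(4 * (1 - a)))).div hden (by positivity)).congr_deriv ?_
  have hmul : r * r ^ (-(2 * a)) = r ^ (2 * (1 - a) - 1) := by
    rw [show 2 * (1 - a) - 1 = 1 + -(2 * a) by ring, rpow_add hr, rpow_one]
  rw [exp_Uval hlam ha hr.le, ← mul_assoc r, hmul]
  field_simp
  ring

theorem continuousOn_bubblePrimitive (ha : a < 1) :
    ContinuousOn (bubblePrimitive lam a) (Ici 0) := by
  have hpow : Continuous fun t : ℝ => t ^ (2 * (1 - a)) := continuous_rpow_const (by linarith)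
  exact continuousOn_const.div (by fun_prop) fun t (ht : 0 ≤ t) => by positivity

theorem integrableOn_bubble_radial (hlam : lam ≠ 0) (ha : a < 1) (R : ℝ) :
    IntegrableOn (fun r => r * (r ^ (-(2 * a)) * exp (Uval lam a r))) (Ioc 0 R) :=
  integrableOn_deriv_of_nonneg ((continuousOn_bubblePrimitive ha).mono Icc_subset_Ici_self)
    (fun _ hr => hasDerivAt_bubblePrimitive hlam ha.ne hr.1)
    fun r hr => by have := hr.1.le; positivity

theorem setIntegral_bubble_radial (hlam : lam ≠ 0) (ha : a < 1) {R : ℝ} (hR : 0 ≤ R) :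
    ∫ r in Ioo 0 R, r * (r ^ (-(2 * a)) * exp (Uval lam a r)) =
      4 * (1 - a) - 4 * (1 - a) / (1 + lam ^ 2 / 8 * R ^ (2 * (1 - a))) := by
  rw [← integral_Ioc_eq_integral_Ioo, ← integral_of_le hR,
    integral_eq_sub_of_hasDerivAt_of_le hR
      ((continuousOn_bubblePrimitive ha).mono Icc_subset_Ici_self)
      (fun _ hr => hasDerivAt_bubblePrimitive hlam ha.ne hr.1)
      ((intervalIntegrable_iff_integrableOn_Ioc_of_le hR).2 (integrableOn_bubble_radial hlam ha R))]
  simp only [bubblePrimitive, zero_rpow (by linarith : 2 * (1 - a) ≠ 0), mul_zero, add_zero,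
    div_one]
  ring

end Bubble

theorem mul_mul_rpow_eq_eight_of_Uval_eq {lam1 lam2 a R : ℝ} (h1 : 0 < lam1) (h2 : 0 < lam2)
    (hne : lam1 ≠ lam2) (ha : a ≠ 1) (hR : 0 ≤ R) (heq : Uval lam1 a R = Uval lam2 a R) :
    lam1 * lam2 * R ^ (2 * (1 - a)) = 8 := by
  set T := R ^ (2 * (1 - a))
  have hT : 0 ≤ T := rpow_nonneg hR _
  have hb : (1 - a) ^ 2 ≠ 0 := pow_ne_zero 2 (sub_ne_zero.2 ha.symm)
  have hexp := congrArg exp heq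
  rw [exp_Uval h1.ne' ha hR, exp_Uval h2.ne' ha hR,
    div_eq_div_iff (by positivity) (by positivity)] at hexp
  have hsq : (lam1 * (1 + lam2 ^ 2 / 8 * T)) ^ 2 = (lam2 * (1 + lam1 ^ 2 / 8 * T)) ^ 2 :=
    mul_right_cancel₀ hb (by linear_combination hexp)
  have hlin := (sq_eq_sq₀ (by positivity) (by positivity)).1 hsq
  have hfactor : (lam1 - lam2) * (lam1 * lam2 * T - 8) = 0 := by linear_combination -8 * hlin
  exact sub_eq_zero.1 ((mul_eq_zero.1 hfactor).resolve_left (sub_ne_zero.2 hne))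

/-- If `U_{λ₁,α}` and `U_{λ₂,α}` (with `λ₁ ≠ λ₂`) agree at a point of norm `R`,
then the sum of their masses on `B_R(0)` is `8π(1−α)`. -/
theorem bubble_mass_sum (a R lam1 lam2 : ℝ) (ha : a ∈ Set.Ico (0:ℝ) 1) (hR : 0 < R)
    (h1 : 0 < lam1) (h2 : 0 < lam2) (hne : lam1 ≠ lam2)
    (x0 : Pl) (hx0 : ‖x0‖ = R) (heq : U lam1 a x0 = U lam2 a x0) :
    ∫ x in ball (0 : Pl) R,
        (‖x‖ ^ (-(2*a)) * Real.exp (U lam1 a x) + ‖x‖ ^ (-(2*a)) * Real.exp (U lam2 a x))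
      = 8 * π * (1 - a) := by
  have ha1 : a < 1 := ha.2
  have hprod : lam1 * lam2 * R ^ (2 * (1 - a)) = 8 :=
    mul_mul_rpow_eq_eight_of_Uval_eq h1 h2 hne ha1.ne hR.le (hx0 ▸ heq)
  simp only [U]
  rw [setIntegral_ball_fun_norm_plane
    (fun r => r ^ (-(2 * a)) * exp (Uval lam1 a r) + r ^ (-(2 * a)) * exp (Uval lam2 a r))]
  simp only [mul_add]
  rw [integral_add ((integrableOn_bubble_radial h1.ne' ha1 R).mono_set Ioo_subset_Ioc_self)
      ((integrableOn_bubble_radial h2.ne' ha1 R).mono_set Ioo_subset_Ioc_self),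
    setIntegral_bubble_radial h1.ne' ha1 hR.le, setIntegral_bubble_radial h2.ne' ha1 hR.le]
  field_simp
  linear_combination 8 * (1 - a) * (lam1 * lam2 * R ^ (2 * (1 - a)) + 8) * hprod
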